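/- arXiv:1509.03655 — 2 statements merged into one kernel-verified Lean document; each statement's English description precedes it below -/
import Mathlib

section
/- Necessity of the solvability condition for the linearized profile equation: let A : ℝ → ℝ be continuous and bounded, and let φ : ℝ → ℝ be twice continuously differentiable with φ and φ' bounded on ℝ, satisfying -φ''(z) + W''(φ₀(z)) φ(z) = A(z) for all z ∈ ℝ, where φ₀(z) = tanh(z/√2). Then the function z ↦ A(z)φ₀'(z) is integrable on ℝ and ∫_ℝ A(z) φ₀'(z) dz = 0. -/
open MeasureTheory Filter Real Set Topology

noncomputable def myQ (z : ℝ) : ℝ := 1 / (Real.sqrt 2 * Real.cosh (z / Real.sqrt 2) ^ 2)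

noncomputable def myQ' (z : ℝ) : ℝ :=
  -Real.sinh (z / Real.sqrt 2) / Real.cosh (z / Real.sqrt 2) ^ 3

lemma sqrt2_pos : (0:ℝ) < Real.sqrt 2 := Real.sqrt_pos.mpr (by norm_num)

lemma sqrt2_sq : Real.sqrt 2 ^ 2 = 2 := Real.sq_sqrt (by norm_num)

lemma hasDerivAt_div_sqrt2 (z : ℝ) :
    HasDerivAt (fun z : ℝ => z / Real.sqrt 2) (1 / Real.sqrt 2) z :=
  (hasDerivAt_id z).div_const _

lemma hasDerivAt_mySinh (z : ℝ) :
    HasDerivAt (fun z : ℝ => Real.sinh (z / Real.sqrt 2))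
      (Real.cosh (z / Real.sqrt 2) * (1 / Real.sqrt 2)) z :=
  (Real.hasDerivAt_sinh _).comp z (hasDerivAt_div_sqrt2 z)

lemma hasDerivAt_myCosh (z : ℝ) :
    HasDerivAt (fun z : ℝ => Real.cosh (z / Real.sqrt 2))
      (Real.sinh (z / Real.sqrt 2) * (1 / Real.sqrt 2)) z :=
  (Real.hasDerivAt_cosh _).comp z (hasDerivAt_div_sqrt2 z)

lemma hasDerivAt_myTanh (z : ℝ) :
    HasDerivAt (fun z : ℝ => Real.tanh (z / Real.sqrt 2)) (myQ z) z := by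
  have hu : (0:ℝ) < Real.cosh (z / Real.sqrt 2) := Real.cosh_pos _
  have h := (hasDerivAt_mySinh z).div (hasDerivAt_myCosh z) (ne_of_gt hu)
  simp only [Real.tanh_eq_sinh_div_cosh]
  refine h.congr_deriv (Eq.symm ?_)
  have hid : Real.cosh (z / Real.sqrt 2) ^ 2 - Real.sinh (z / Real.sqrt 2) ^ 2 = 1 :=
    Real.cosh_sq_sub_sinh_sq _
  have hs2 : Real.sqrt 2 ≠ 0 := ne_of_gt sqrt2_pos
  unfold myQ
  field_simp
  nlinarith [hid, sqrt2_sq]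

lemma hasDerivAt_myQ (z : ℝ) : HasDerivAt myQ (myQ' z) z := by
  have hu : (0:ℝ) < Real.cosh (z / Real.sqrt 2) := Real.cosh_pos _
  have hs2 : (0:ℝ) < Real.sqrt 2 := sqrt2_pos
  have hd : HasDerivAt (fun z : ℝ => Real.sqrt 2 * Real.cosh (z / Real.sqrt 2) ^ 2)
      (Real.sqrt 2 * ((2 : ℕ) * Real.cosh (z / Real.sqrt 2) ^ 1 *
        (Real.sinh (z / Real.sqrt 2) * (1 / Real.sqrt 2)))) z :=
    ((hasDerivAt_myCosh z).pow 2).const_mul _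
  have h := (hasDerivAt_const z (1:ℝ)).div hd (by positivity)
  refine h.congr_deriv (Eq.symm ?_)
  unfold myQ'
  field_simp
  linear_combination (-Real.sinh (z / Real.sqrt 2)) * sqrt2_sq

lemma hasDerivAt_myQ' (z : ℝ) :
    HasDerivAt myQ' ((3 * Real.tanh (z / Real.sqrt 2) ^ 2 - 1) * myQ z) z := by
  have hu : (0:ℝ) < Real.cosh (z / Real.sqrt 2) := Real.cosh_pos _
  have hs2 : (0:ℝ) < Real.sqrt 2 := sqrt2_pos
  have h := ((hasDerivAt_mySinh z).neg).div ((hasDerivAt_myCosh z).pow 3)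
    (pow_pos hu 3).ne'
  refine h.congr_deriv (Eq.symm ?_)
  simp only [Pi.neg_apply, Pi.pow_apply]
  rw [Real.tanh_eq_sinh_div_cosh]
  unfold myQ
  field_simp
  ring

lemma myQ_nonneg (z : ℝ) : 0 ≤ myQ z := by
  have hu : (0:ℝ) < Real.cosh (z / Real.sqrt 2) := Real.cosh_pos _
  have := sqrt2_pos
  unfold myQ; positivity

lemma myQ_even (z : ℝ) : myQ (-z) = myQ z := by
  unfold myQ
  rw [neg_div, Real.cosh_neg]

lemma abs_sinh_le_cosh (x : ℝ) : |Real.sinh x| ≤ Real.cosh x := by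
  rw [abs_le]
  have h1 := Real.sinh_add_cosh x
  have h2 := Real.cosh_sub_sinh x
  have e1 := Real.exp_pos x
  have e2 := Real.exp_pos (-x)
  constructor <;> linarith

lemma cosh_comp_atTop : Tendsto (fun z : ℝ => Real.cosh (z / Real.sqrt 2)) atTop atTop := by
  apply tendsto_atTop_mono (f := fun z : ℝ => Real.exp (z / Real.sqrt 2) / 2) (fun z => ?_)
    ((tendsto_exp_atTop.comp (Tendsto.atTop_div_const sqrt2_pos tendsto_id)).atTop_div_const
      (by norm_num))
  have h1 := Real.sinh_add_cosh (z / Real.sqrt 2)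
  have := abs_le.mp (abs_sinh_le_cosh (z / Real.sqrt 2))
  linarith [this.1]

lemma cosh_comp_atBot : Tendsto (fun z : ℝ => Real.cosh (z / Real.sqrt 2)) atBot atTop := by
  have h : Tendsto (fun z : ℝ => Real.exp (-(z / Real.sqrt 2)) / 2) atBot atTop := by
    apply Tendsto.atTop_div_const (by norm_num)
    apply tendsto_exp_atTop.comp
    exact tendsto_neg_atBot_atTop.comp (Tendsto.atBot_div_const sqrt2_pos tendsto_id)
  apply tendsto_atTop_mono (fun z => ?_) h
  have h2 := Real.cosh_sub_sinh (z / Real.sqrt 2)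
  have := abs_le.mp (abs_sinh_le_cosh (z / Real.sqrt 2))
  linarith [this.2]

lemma myQ_tendsto (l : Filter ℝ)
    (h : Tendsto (fun z : ℝ => Real.cosh (z / Real.sqrt 2)) l atTop) :
    Tendsto myQ l (𝓝 0) := by
  have h2 : Tendsto (fun z : ℝ => Real.sqrt 2 * Real.cosh (z / Real.sqrt 2) ^ 2) l atTop := by
    apply Tendsto.const_mul_atTop sqrt2_pos
    exact (h.atTop_mul_atTop₀ h).congr (fun z => (pow_two _).symm)
  exact h2.inv_tendsto_atTop.congr (fun z => by simp [myQ, one_div])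

lemma myQ'_tendsto (l : Filter ℝ)
    (h : Tendsto (fun z : ℝ => Real.cosh (z / Real.sqrt 2)) l atTop) :
    Tendsto myQ' l (𝓝 0) := by
  apply squeeze_zero_norm (a := fun z => Real.sqrt 2 * myQ z)
  · intro z
    have hu : (0:ℝ) < Real.cosh (z / Real.sqrt 2) := Real.cosh_pos _
    have hs := abs_sinh_le_cosh (z / Real.sqrt 2)
    have hsq : Real.sqrt 2 ≠ 0 := ne_of_gt sqrt2_pos
    unfold myQ' myQ
    rw [Real.norm_eq_abs, abs_div, abs_neg, abs_of_pos (by positivity : (0:ℝ) <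
      Real.cosh (z / Real.sqrt 2) ^ 3)]
    rw [div_le_iff₀ (by positivity)]
    have heq : Real.sqrt 2 * (1 / (Real.sqrt 2 * Real.cosh (z / Real.sqrt 2) ^ 2))
        = 1 / Real.cosh (z / Real.sqrt 2) ^ 2 := by field_simp
    rw [heq]
    calc |Real.sinh (z / Real.sqrt 2)| ≤ Real.cosh (z / Real.sqrt 2) := hs
      _ = 1 / Real.cosh (z / Real.sqrt 2) ^ 2 * Real.cosh (z / Real.sqrt 2) ^ 3 := by
          field_simp
  · simpa using (myQ_tendsto l h).const_mul (Real.sqrt 2)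

lemma tanh_tendsto_atTop : Tendsto (fun z : ℝ => Real.tanh (z / Real.sqrt 2)) atTop (𝓝 1) := by
  have key : ∀ x : ℝ, Real.tanh x = (1 - Real.exp (-x) * Real.exp (-x)) /
      (1 + Real.exp (-x) * Real.exp (-x)) := by
    intro x
    rw [Real.tanh_eq_sinh_div_cosh, Real.sinh_eq, Real.cosh_eq]
    have h1 : Real.exp (-x) = (Real.exp x)⁻¹ := Real.exp_neg x
    have h2 : Real.exp x ≠ 0 := Real.exp_ne_zero x
    have h3 : (0:ℝ) < Real.exp x + Real.exp (-x) := by positivity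
    rw [h1]
    field_simp
  have hexp : Tendsto (fun z : ℝ => Real.exp (-(z / Real.sqrt 2))) atTop (𝓝 0) :=
    Real.tendsto_exp_neg_atTop_nhds_zero.comp (Tendsto.atTop_div_const sqrt2_pos tendsto_id)
  have hnum : Tendsto (fun z : ℝ => 1 - Real.exp (-(z / Real.sqrt 2)) *
      Real.exp (-(z / Real.sqrt 2))) atTop (𝓝 (1:ℝ)) := by
    simpa using tendsto_const_nhds.sub (hexp.mul hexp)
  have hden : Tendsto (fun z : ℝ => 1 + Real.exp (-(z / Real.sqrt 2)) *
      Real.exp (-(z / Real.sqrt 2))) atTop (𝓝 (1:ℝ)) := by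
    simpa using tendsto_const_nhds.add (hexp.mul hexp)
  have h := hnum.div hden one_ne_zero
  simp only [div_one] at h
  refine Tendsto.congr (fun z => ?_) h
  exact (key (z / Real.sqrt 2)).symm

lemma tanh_tendsto_atBot : Tendsto (fun z : ℝ => Real.tanh (z / Real.sqrt 2)) atBot (𝓝 (-1)) := by
  have h : Tendsto (fun z : ℝ => -Real.tanh ((-z) / Real.sqrt 2)) atBot (𝓝 (-1)) := by
    have := (tanh_tendsto_atTop.comp tendsto_neg_atBot_atTop).neg
    simpa using this
  refine Tendsto.congr (fun z => ?_) h
  rw [neg_div, Real.tanh_neg, neg_neg]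

lemma myQ_integrable : Integrable myQ := by
  have hIoi : IntegrableOn myQ (Ioi 0) := by
    apply integrableOn_Ioi_deriv_of_nonneg' (g := fun z => Real.tanh (z / Real.sqrt 2))
      (fun x _ => hasDerivAt_myTanh x) (fun x _ => myQ_nonneg x) tanh_tendsto_atTop
  rw [← integrableOn_univ, ← Iio_union_Ici (a := (0:ℝ)), integrableOn_union]
  constructor
  · rw [← (Measure.measurePreserving_neg (volume : Measure ℝ)).integrableOn_comp_preimage
      (Homeomorph.neg ℝ).measurableEmbedding]
    simp only [Function.comp_def, neg_preimage, neg_Iio, neg_zero]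
    refine (hIoi.congr_fun (fun x _ => ?_) measurableSet_Ioi)
    exact (myQ_even x).symm
  · rw [integrableOn_Ici_iff_integrableOn_Ioi]
    exact hIoi

lemma myQ_continuous : Continuous myQ := by
  apply continuous_const.div
  · exact continuous_const.mul ((Real.continuous_cosh.comp
      (continuous_id.div_const _)).pow 2)
  · intro z
    have h1 : (0:ℝ) < Real.cosh (z / Real.sqrt 2) := Real.cosh_pos _
    have := sqrt2_pos
    positivity

/-- Necessity of the solvability condition for the linearized profile equation:
if `A : ℝ → ℝ` is continuous and bounded, and `φ : ℝ → ℝ` is twice continuously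
differentiable with `φ` and `φ'` bounded on `ℝ`, satisfying
`-φ''(z) + W''(φ₀(z)) φ(z) = A(z)` for all `z`, where `φ₀(z) = tanh(z/√2)` and
`W''(φ) = 3φ² - 1`, then `z ↦ A(z)φ₀'(z)` is integrable on `ℝ` and
`∫_ℝ A(z) φ₀'(z) dz = 0`. -/
theorem stmt4 (φ₀ A φ : ℝ → ℝ)
    (hφ₀ : ∀ z : ℝ, φ₀ z = Real.tanh (z / Real.sqrt 2))
    (hA_cont : Continuous A)
    (hA_bdd : ∃ C : ℝ, ∀ z : ℝ, |A z| ≤ C)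
    (hφ_smooth : ContDiff ℝ 2 φ)
    (hφ_bdd : ∃ C : ℝ, ∀ z : ℝ, |φ z| ≤ C)
    (hφ'_bdd : ∃ C : ℝ, ∀ z : ℝ, |deriv φ z| ≤ C)
    (heq : ∀ z : ℝ, -(deriv (deriv φ) z) + (3 * (φ₀ z) ^ 2 - 1) * φ z = A z) :
    Integrable (fun z : ℝ => A z * deriv φ₀ z) ∧
    ∫ z : ℝ, A z * deriv φ₀ z = 0 := by
  obtain ⟨CA, hCA⟩ := hA_bdd
  obtain ⟨C0, hC0⟩ := hφ_bdd
  obtain ⟨C1, hC1⟩ := hφ'_bdd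
  have hE : φ₀ = fun z => Real.tanh (z / Real.sqrt 2) := funext hφ₀
  subst hE
  -- deriv φ₀ = myQ
  have hderiv₀ : ∀ z : ℝ, deriv (fun z : ℝ => Real.tanh (z / Real.sqrt 2)) z = myQ z :=
    fun z => (hasDerivAt_myTanh z).deriv
  have hgoal_eq : (fun z : ℝ => A z * deriv (fun z : ℝ => Real.tanh (z / Real.sqrt 2)) z)
      = fun z => A z * myQ z := funext fun z => by rw [hderiv₀ z]
  rw [hgoal_eq]
  -- differentiability of φ
  have hφ1 : ∀ z : ℝ, HasDerivAt φ (deriv φ z) z := fun z =>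
    ((hφ_smooth.differentiable (by norm_num)) z).hasDerivAt
  have hφ2' : ContDiff ℝ (1 + 1) φ := by
    rwa [one_add_one_eq_two]
  have hdφ : Differentiable ℝ (deriv φ) :=
    (contDiff_succ_iff_deriv.mp hφ2').2.2.differentiable one_ne_zero
  have hφ2 : ∀ z : ℝ, HasDerivAt (deriv φ) (deriv (deriv φ) z) z := fun z =>
    (hdφ z).hasDerivAt
  -- the auxiliary function g
  set g : ℝ → ℝ := fun z => -(deriv φ z) * myQ z + φ z * myQ' z with hg_def
  have hg : ∀ z : ℝ, HasDerivAt g (A z * myQ z) z := by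
    intro z
    have h1 := ((hφ2 z).neg.mul (hasDerivAt_myQ z)).add
      ((hφ1 z).mul (hasDerivAt_myQ' z))
    refine h1.congr_deriv (Eq.symm ?_)
    simp only [Pi.neg_apply]
    have h2 := heq z
    simp only at h2
    linear_combination (-(myQ z)) * h2
  -- integrability
  have hInt : Integrable (fun z : ℝ => A z * myQ z) := by
    apply Integrable.mono' (myQ_integrable.const_mul CA)
    · exact (hA_cont.mul myQ_continuous).aestronglyMeasurable
    · refine ae_of_all _ (fun z => ?_)
      rw [Real.norm_eq_abs, abs_mul, abs_of_nonneg (myQ_nonneg z)]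
      exact mul_le_mul_of_nonneg_right (hCA z) (myQ_nonneg z)
  -- limits of g at ±∞
  have hglim : ∀ (l : Filter ℝ),
      Tendsto (fun z : ℝ => Real.cosh (z / Real.sqrt 2)) l atTop → Tendsto g l (𝓝 0) := by
    intro l hl
    apply squeeze_zero_norm (a := fun z => C1 * |myQ z| + C0 * |myQ' z|)
    · intro z
      calc ‖g z‖ ≤ |(-(deriv φ z)) * myQ z| + |φ z * myQ' z| := abs_add_le _ _
        _ = |deriv φ z| * |myQ z| + |φ z| * |myQ' z| := by rw [abs_mul, abs_mul, abs_neg]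
        _ ≤ C1 * |myQ z| + C0 * |myQ' z| :=
            add_le_add (mul_le_mul_of_nonneg_right (hC1 z) (abs_nonneg _))
              (mul_le_mul_of_nonneg_right (hC0 z) (abs_nonneg _))
    · have t1 := ((myQ_tendsto l hl).abs.const_mul C1)
      have t2 := ((myQ'_tendsto l hl).abs.const_mul C0)
      simpa using t1.add t2
  have hbot : Tendsto g atBot (𝓝 0) := hglim _ cosh_comp_atBot
  have htop : Tendsto g atTop (𝓝 0) := hglim _ cosh_comp_atTop
  refine ⟨hInt, ?_⟩
  have hmain := integral_of_hasDerivAt_of_tendsto hg hInt hbot htop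
  simpa using hmain
end

section
/- Convergence of the total bulk cholesterol mass: let c₁, c₂, M, b, g > 0, define P(y) = -(c₁/b)y² + (c₁(M-g)/b - c₂)y + c₂M, and let y∞ := b·u∞ where u∞ := (1/2)((M-g)/b - c₂/c₁) + √((1/4)((M-g)/b - c₂/c₁)² + c₂M/(c₁b)) (so P(y∞) = 0 and y∞ > 0). If y : [0,∞) → ℝ is differentiable with y'(t) = P(y(t)) for all t ≥ 0 and y(0) ≥ 0, then y(t) ≥ 0 for all t ≥ 0 and y(t) → y∞ as t → ∞. -/
open Filter Topology

/-- Convergence of the total bulk cholesterol mass: let `c₁, c₂, M, b, g > 0`,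
`P(y) = -(c₁/b)y² + (c₁(M-g)/b - c₂)y + c₂M`, and `y∞ := b·u∞` with
`u∞ := (1/2)((M-g)/b - c₂/c₁) + √((1/4)((M-g)/b - c₂/c₁)² + c₂M/(c₁b))`.
If `y` is differentiable with `y'(t) = P(y(t))` for all `t ≥ 0` and `y(0) ≥ 0`,
then `y(t) ≥ 0` for all `t ≥ 0` and `y(t) → y∞` as `t → ∞`. -/
theorem stmt9 (c₁ c₂ M b g : ℝ) (hc₁ : 0 < c₁) (hc₂ : 0 < c₂) (hM : 0 < M)
    (hb : 0 < b) (hg : 0 < g)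
    (P : ℝ → ℝ)
    (hP : ∀ y : ℝ, P y = -(c₁ / b) * y ^ 2 + (c₁ * (M - g) / b - c₂) * y + c₂ * M)
    (uinf yinf : ℝ)
    (huinf : uinf = (1 / 2) * ((M - g) / b - c₂ / c₁) +
      Real.sqrt ((1 / 4) * ((M - g) / b - c₂ / c₁) ^ 2 + c₂ * M / (c₁ * b)))
    (hyinf : yinf = b * uinf)
    (y : ℝ → ℝ)
    (hy : ∀ t : ℝ, 0 ≤ t → HasDerivAt y (P (y t)) t)
    (hy0 : 0 ≤ y 0) :
    (∀ t : ℝ, 0 ≤ t → 0 ≤ y t) ∧ Tendsto y atTop (nhds yinf) := by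
  -- basic algebra about the roots of P
  have hP0 : P 0 = c₂ * M := by rw [hP]; ring
  set ym : ℝ := (M - g) - b * c₂ / c₁ - yinf with hym
  have key : 0 < yinf ∧ yinf * ym = -(b * c₂ * M / c₁) := by
    set r : ℝ := Real.sqrt ((1 / 4) * ((M - g) / b - c₂ / c₁) ^ 2 + c₂ * M / (c₁ * b)) with hr
    have hrnn : 0 ≤ r := Real.sqrt_nonneg _
    have hr2 : r ^ 2 = (1 / 4) * ((M - g) / b - c₂ / c₁) ^ 2 + c₂ * M / (c₁ * b) :=
      Real.sq_sqrt (by positivity)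
    have hCpos : 0 < c₂ * M / (c₁ * b) := by positivity
    constructor
    · rw [hyinf, huinf]
      have : 0 < (1 / 2) * ((M - g) / b - c₂ / c₁) + r := by
        nlinarith [hrnn, hr2, hCpos, sq_nonneg (r + (1/2) * ((M - g) / b - c₂ / c₁)),
          sq_nonneg (r - (1/2) * ((M - g) / b - c₂ / c₁))]
      positivity
    · rw [hym, hyinf, huinf]
      field_simp
      field_simp at hr2
      linear_combination (-1) * hr2
  obtain ⟨hyinfpos, hprod⟩ := key
  have hymneg : ym < 0 := by
    by_contra h
    push_neg at h
    have h1 : 0 ≤ yinf * ym := mul_nonneg (le_of_lt hyinfpos) h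
    have h2 : 0 < b * c₂ * M / c₁ := by positivity
    rw [hprod] at h1
    linarith
  have hfact : ∀ z : ℝ, P z = -(c₁ / b) * (z - yinf) * (z - ym) := by
    intro z
    rw [hP, hym]
    rw [hym] at hprod
    field_simp at hprod ⊢
    linear_combination hprod
  -- Part 1: nonnegativity
  have hcont : ∀ t : ℝ, 0 ≤ t → ContinuousAt y t := fun t ht => (hy t ht).continuousAt
  have hpos : ∀ t : ℝ, 0 ≤ t → 0 ≤ y t := by
    intro t₀ ht₀
    by_contra hneg
    push_neg at hneg
    have ht₀pos : 0 < t₀ := by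
      rcases eq_or_lt_of_le ht₀ with h | h
      · exact absurd hy0 (by rw [← h] at hneg; exact not_le.mpr hneg)
      · exact h
    set S : Set ℝ := {τ : ℝ | τ ∈ Set.Icc 0 t₀ ∧ 0 ≤ y τ} with hS
    have hS0 : (0:ℝ) ∈ S := ⟨⟨le_refl 0, le_of_lt ht₀pos⟩, hy0⟩
    have hSb : BddAbove S := ⟨t₀, fun x hx => hx.1.2⟩
    have hycont : ContinuousOn y (Set.Icc 0 t₀) := fun x hx =>
      (hcont x hx.1).continuousWithinAt
    have hScl : IsClosed S := by
      have : S = Set.Icc 0 t₀ ∩ y ⁻¹' Set.Ici 0 := by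
        ext x; simp [hS, Set.mem_setOf_eq, and_comm]
      rw [this]
      exact hycont.preimage_isClosed_of_isClosed isClosed_Icc isClosed_Ici
    set s := sSup S with hs
    have hScomp : IsCompact S :=
      isCompact_Icc.of_isClosed_subset hScl (fun x hx => hx.1)
    have hsS : s ∈ S := hScomp.sSup_mem ⟨0, hS0⟩
    have hs0 : 0 ≤ s := hsS.1.1
    have hslt : s < t₀ := by
      rcases eq_or_lt_of_le hsS.1.2 with h | h
      · exact absurd hsS.2 (by rw [h]; exact not_le.mpr hneg)
      · exact h
    have hupper : ∀ τ : ℝ, τ ∈ Set.Ioc s t₀ → y τ < 0 := by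
      intro τ hτ
      by_contra h
      push_neg at h
      have : τ ∈ S := ⟨⟨le_trans hs0 (le_of_lt hτ.1), hτ.2⟩, h⟩
      exact absurd (le_csSup hSb this) (not_le.mpr hτ.1)
    have hIoc : Set.Ioc s t₀ ∈ 𝓝[>] s := Ioc_mem_nhdsGT_of_mem ⟨le_refl s, hslt⟩
    have hys_le : y s ≤ 0 := by
      have h1 : Tendsto y (𝓝[>] s) (𝓝 (y s)) :=
        ((hcont s hs0).tendsto).mono_left nhdsWithin_le_nhds
      refine le_of_tendsto h1 ?_
      filter_upwards [hIoc] with τ hτ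
      exact le_of_lt (hupper τ hτ)
    have hys : y s = 0 := le_antisymm hys_le hsS.2
    -- slope argument
    have hder := hy s hs0
    rw [hasDerivAt_iff_tendsto_slope] at hder
    have hder' : Tendsto (slope y s) (𝓝[>] s) (𝓝 (P (y s))) :=
      hder.mono_left (nhdsWithin_mono s (fun x hx => ne_of_gt hx))
    have hPle : P (y s) ≤ 0 := by
      refine le_of_tendsto hder' ?_
      filter_upwards [hIoc] with τ hτ
      rw [slope_def_field]
      have h1 : y τ - y s ≤ 0 := by
        have := hupper τ hτ
        linarith
      have h2 : 0 < τ - s := sub_pos.mpr hτ.1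
      exact div_nonpos_of_nonpos_of_nonneg h1 (le_of_lt h2)
    rw [hys, hP0] at hPle
    nlinarith
  refine ⟨hpos, ?_⟩
  -- Part 2: convergence via Lyapunov function h t = (y t - yinf)^2 * exp (K t)
  set K : ℝ := -2 * c₁ * ym / b with hK
  have hKpos : 0 < K := by
    rw [hK]
    have : 0 < -ym := neg_pos.mpr hymneg
    have : 0 < 2 * c₁ * (-ym) / b := by positivity
    convert this using 1; ring
  set h : ℝ → ℝ := fun t => (y t - yinf) ^ 2 * Real.exp (K * t) with hh
  have hder : ∀ t : ℝ, 0 ≤ t →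
      HasDerivAt h ((2 * (y t - yinf) * P (y t) + K * (y t - yinf) ^ 2) * Real.exp (K * t)) t := by
    intro t ht
    have h1 : HasDerivAt (fun t => (y t - yinf) ^ 2) (2 * (y t - yinf) * P (y t)) t := by
      have := ((hy t ht).sub_const yinf).fun_pow 2
      exact this.congr_deriv (by ring)
    have hlin : HasDerivAt (fun x : ℝ => K * x) K t := by
      simpa using (hasDerivAt_id t).const_mul K
    have h2 : HasDerivAt (fun t => Real.exp (K * t)) (K * Real.exp (K * t)) t := by
      simpa [mul_comm] using hlin.exp
    have := h1.fun_mul h2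
    exact this.congr_deriv (by ring)
  have hanti : AntitoneOn h (Set.Ici 0) := by
    apply antitoneOn_of_deriv_nonpos (convex_Ici 0)
    · exact fun x hx => ((hder x hx).continuousAt).continuousWithinAt
    · intro x hx
      rw [interior_Ici] at hx
      exact ((hder x (le_of_lt hx)).differentiableAt).differentiableWithinAt
    · intro x hx
      rw [interior_Ici] at hx
      rw [(hder x (le_of_lt hx)).deriv]
      have hyx : 0 ≤ y x := hpos x (le_of_lt hx)
      have hkey : 2 * (y x - yinf) * P (y x) + K * (y x - yinf) ^ 2
          = -2 * (c₁ / b) * (y x - yinf) ^ 2 * y x := by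
        rw [hfact, hK]
        field_simp
        ring
      rw [hkey]
      apply mul_nonpos_of_nonpos_of_nonneg
      · have : 0 ≤ 2 * (c₁ / b) * (y x - yinf) ^ 2 * y x := by positivity
        linarith
      · exact le_of_lt (Real.exp_pos _)
  have hbound : ∀ t : ℝ, 0 ≤ t → (y t - yinf) ^ 2 ≤ (y 0 - yinf) ^ 2 * Real.exp (-K * t) := by
    intro t ht
    have h1 : h t ≤ h 0 := hanti (Set.mem_Ici.mpr (le_refl 0)) (Set.mem_Ici.mpr ht) ht
    rw [hh] at h1
    simp only [mul_zero, Real.exp_zero, mul_one] at h1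
    have h2 : (0:ℝ) < Real.exp (K * t) := Real.exp_pos _
    have h3 : (y t - yinf) ^ 2 ≤ (y 0 - yinf) ^ 2 / Real.exp (K * t) := by
      rw [le_div_iff₀ h2]; exact h1
    rw [neg_mul, Real.exp_neg, ← div_eq_mul_inv]
    exact h3
  have hexp0 : Tendsto (fun t : ℝ => (y 0 - yinf) ^ 2 * Real.exp (-K * t)) atTop (nhds 0) := by
    have h1 : Tendsto (fun t : ℝ => K * t) atTop atTop :=
      Filter.Tendsto.const_mul_atTop hKpos tendsto_id
    have h2 : Tendsto (fun t : ℝ => Real.exp (-(K * t))) atTop (nhds 0) :=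
      Real.tendsto_exp_neg_atTop_nhds_zero.comp h1
    have h3 : Tendsto (fun t : ℝ => (y 0 - yinf) ^ 2 * Real.exp (-(K * t))) atTop (nhds 0) := by
      simpa using h2.const_mul ((y 0 - yinf) ^ 2)
    convert h3 using 2 with t
    ring_nf
  have hsq0 : Tendsto (fun t : ℝ => (y t - yinf) ^ 2) atTop (nhds 0) := by
    apply squeeze_zero' ?_ ?_ hexp0
    · filter_upwards [eventually_ge_atTop (0:ℝ)] with t _
      positivity
    · filter_upwards [eventually_ge_atTop (0:ℝ)] with t ht
      exact hbound t ht
  rw [tendsto_iff_dist_tendsto_zero]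
  have habs : Tendsto (fun t : ℝ => Real.sqrt ((y t - yinf) ^ 2)) atTop (nhds 0) := by
    have := (Real.continuous_sqrt.tendsto 0).comp hsq0
    simpa [Function.comp_def] using this
  convert habs using 2 with t
  rw [Real.sqrt_sq_eq_abs, Real.dist_eq]
end
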